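/- arXiv:2605.26977 — 7 statements merged into one kernel-verified Lean document; each statement's English description precedes it below -/
import Mathlib

section
/- Let n ≥ 1, R > 0, L > μ > 0, and set κ = μ/L ∈ (0,1). Suppose x, σ ∈ ℝⁿ satisfy ‖x‖₂ ≤ R, ‖σ‖₂ ≤ L, ⟨σ, x⟩ ≥ μR, and σ₁ ≥ σ₂ ≥ ... ≥ σₙ ≥ 0. Then ∑_{i=1}^n x_i ≥ (κ - √(n-1)·√(1-κ²))·R. -/
open Finset

theorem spectral_descent_descent_term_lower_bound
    (n : ℕ) (hn : 1 ≤ n) (R L μ : ℝ) (hR : 0 < R) (hμ : 0 < μ) (hμL : μ < L)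
    (κ : ℝ) (hκ : κ = μ / L)
    (x σ : Fin n → ℝ)
    (hx : Real.sqrt (∑ i, x i ^ 2) ≤ R)
    (hσ : Real.sqrt (∑ i, σ i ^ 2) ≤ L)
    (hdot : μ * R ≤ ∑ i, σ i * x i)
    (hmono : ∀ i j : Fin n, i ≤ j → σ j ≤ σ i)
    (hnonneg : ∀ i, 0 ≤ σ i) :
    (κ - Real.sqrt ((n : ℝ) - 1) * Real.sqrt (1 - κ ^ 2)) * R ≤ ∑ i, x i := by
  have hL : (0:ℝ) < L := hμ.trans hμL
  set S2 := ∑ i, σ i ^ 2 with hS2def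
  set X2 := ∑ i, x i ^ 2 with hX2def
  set a := ∑ i, σ i * x i with hadef
  set t := ∑ i, σ i with htdef
  set T := ∑ i, x i with hTdef
  clear_value S2 X2 a t T
  have hX2nn : 0 ≤ X2 := hX2def ▸ Finset.sum_nonneg fun i _ => sq_nonneg _
  have hS2nn : 0 ≤ S2 := hS2def ▸ Finset.sum_nonneg fun i _ => sq_nonneg _
  have hX2R : X2 ≤ R ^ 2 := by
    have h := Real.sq_sqrt hX2nn
    nlinarith [Real.sqrt_nonneg X2]
  have hS2L : S2 ≤ L ^ 2 := by
    have h := Real.sq_sqrt hS2nn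
    nlinarith [Real.sqrt_nonneg S2]
  have ha_pos : 0 < a := lt_of_lt_of_le (mul_pos hμ hR) hdot
  have hCS : a ^ 2 ≤ S2 * X2 := by
    rw [hadef, hS2def, hX2def]; exact Finset.sum_mul_sq_le_sq_mul_sq _ σ x
  have hS2pos : 0 < S2 := by nlinarith
  have ht_nn : 0 ≤ t := htdef ▸ Finset.sum_nonneg fun i _ => hnonneg i
  -- t^2 ≥ S2
  have hS2t : S2 ≤ t ^ 2 := by
    have h1 : S2 ≤ ∑ i, σ i * t := by
      rw [hS2def]
      apply Finset.sum_le_sum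
      intro i _
      have hle : σ i ≤ t := by
        rw [htdef]; exact Finset.single_le_sum (fun j _ => hnonneg j) (Finset.mem_univ i)
      nlinarith [hnonneg i]
    have h2 : ∑ i, σ i * t = t * t := by rw [← Finset.sum_mul, ← htdef]
    nlinarith
  -- t^2 ≤ n * S2
  have htn : t ^ 2 ≤ (n : ℝ) * S2 := by
    calc t ^ 2 = (∑ i, σ i * 1) ^ 2 := by rw [htdef]; simp
      _ ≤ (∑ i : Fin n, σ i ^ 2) * ∑ i : Fin n, (1:ℝ) ^ 2 :=
          Finset.sum_mul_sq_le_sq_mul_sq _ σ (fun _ => (1:ℝ))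
      _ = S2 * n := by rw [← hS2def]; simp [Finset.card_univ]
      _ = (n : ℝ) * S2 := mul_comm _ _
  -- main Cauchy-Schwarz with projections (cleared of denominators)
  have key : (S2 * T - a * t) ^ 2 ≤ ((n : ℝ) * S2 - t ^ 2) * (S2 * X2 - a ^ 2) := by
    have h := Finset.sum_mul_sq_le_sq_mul_sq Finset.univ
      (fun i => S2 - t * σ i) (fun i => S2 * x i - a * σ i)
    have e1 : ∑ i, (S2 - t * σ i) * (S2 * x i - a * σ i) = S2 * (S2 * T - a * t) := by
      have h1 : ∀ i : Fin n, (S2 - t * σ i) * (S2 * x i - a * σ i)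
          = (S2 * S2) * x i - (S2 * a) * σ i - (t * S2) * (σ i * x i) + (t * a) * σ i ^ 2 :=
        fun i => by ring
      rw [Finset.sum_congr rfl fun i _ => h1 i, Finset.sum_add_distrib, Finset.sum_sub_distrib,
        Finset.sum_sub_distrib, ← Finset.mul_sum, ← Finset.mul_sum, ← Finset.mul_sum,
        ← Finset.mul_sum, ← hTdef, ← htdef, ← hadef, ← hS2def]
      ring
    have e2 : ∑ i, (S2 - t * σ i) ^ 2 = S2 * ((n : ℝ) * S2 - t ^ 2) := by
      have h1 : ∀ i : Fin n, (S2 - t * σ i) ^ 2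
          = S2 ^ 2 - (2 * S2 * t) * σ i + (t ^ 2) * σ i ^ 2 := fun i => by ring
      rw [Finset.sum_congr rfl fun i _ => h1 i, Finset.sum_add_distrib, Finset.sum_sub_distrib,
        ← Finset.mul_sum, ← Finset.mul_sum, ← htdef, ← hS2def, Finset.sum_const,
        Finset.card_univ, nsmul_eq_mul, Fintype.card_fin]
      ring
    have e3 : ∑ i, (S2 * x i - a * σ i) ^ 2 = S2 * (S2 * X2 - a ^ 2) := by
      have h1 : ∀ i : Fin n, (S2 * x i - a * σ i) ^ 2
          = S2 ^ 2 * x i ^ 2 - (2 * S2 * a) * (σ i * x i) + a ^ 2 * σ i ^ 2 := fun i => by ring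
      rw [Finset.sum_congr rfl fun i _ => h1 i, Finset.sum_add_distrib, Finset.sum_sub_distrib,
        ← Finset.mul_sum, ← Finset.mul_sum, ← Finset.mul_sum, ← hadef, ← hS2def, ← hX2def]
      ring
    rw [e1, e2, e3] at h
    have h' : S2 ^ 2 * ((S2 * T - a * t) ^ 2) ≤ S2 ^ 2 * (((n : ℝ) * S2 - t ^ 2) * (S2 * X2 - a ^ 2)) :=
      calc S2 ^ 2 * ((S2 * T - a * t) ^ 2) = (S2 * (S2 * T - a * t)) ^ 2 := by ring
        _ ≤ (S2 * ((n : ℝ) * S2 - t ^ 2)) * (S2 * (S2 * X2 - a ^ 2)) := h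
        _ = S2 ^ 2 * (((n : ℝ) * S2 - t ^ 2) * (S2 * X2 - a ^ 2)) := by ring
    exact le_of_mul_le_mul_left h' (by positivity)
  have hκ0 : 0 < κ := by rw [hκ]; positivity
  have hκ1 : κ < 1 := by rw [hκ]; exact (div_lt_one hL).mpr hμL
  have h1κ : 0 ≤ 1 - κ ^ 2 := by
    have e : (1 - κ) * (1 + κ) = 1 - κ ^ 2 := by ring
    have pos : 0 ≤ (1 - κ) * (1 + κ) := mul_nonneg (by linarith) (by linarith)
    linarith
  have hn1 : (0:ℝ) ≤ (n : ℝ) - 1 := by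
    have : (1:ℝ) ≤ (n : ℝ) := by exact_mod_cast hn
    linarith
  have hκ2L : κ ^ 2 * L ^ 2 = μ ^ 2 := by rw [hκ]; field_simp
  -- bounds on the two factors
  have b1 : (n : ℝ) * S2 - t ^ 2 ≤ ((n : ℝ) - 1) * S2 := by
    have e : ((n : ℝ) - 1) * S2 = (n : ℝ) * S2 - S2 := by ring
    linarith only [hS2t, e]
  have b2 : 0 ≤ (n : ℝ) * S2 - t ^ 2 := by linarith only [htn]
  have ha2 : μ ^ 2 * R ^ 2 ≤ a ^ 2 := by
    have h := mul_le_mul hdot hdot (mul_pos hμ hR).le ha_pos.le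
    calc μ ^ 2 * R ^ 2 = (μ * R) * (μ * R) := by ring
      _ ≤ a * a := h
      _ = a ^ 2 := by ring
  have b3 : S2 * X2 - a ^ 2 ≤ (1 - κ ^ 2) * R ^ 2 * S2 := by
    have hk2 : κ ^ 2 * S2 ≤ μ ^ 2 := by
      have h := mul_le_mul_of_nonneg_left hS2L (sq_nonneg κ)
      linarith only [h, hκ2L]
    have h1 : S2 * X2 ≤ S2 * R ^ 2 := mul_le_mul_of_nonneg_left hX2R hS2nn
    have h2 : κ ^ 2 * S2 * R ^ 2 ≤ μ ^ 2 * R ^ 2 := mul_le_mul_of_nonneg_right hk2 (sq_nonneg R)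
    have e : (1 - κ ^ 2) * R ^ 2 * S2 = S2 * R ^ 2 - κ ^ 2 * S2 * R ^ 2 := by ring
    linarith only [h1, h2, ha2, e]
  have b4 : 0 ≤ S2 * X2 - a ^ 2 := by linarith only [hCS]
  set D := Real.sqrt ((n : ℝ) - 1) * Real.sqrt (1 - κ ^ 2) * R with hDdef
  have hDnn : 0 ≤ D := by positivity
  have hD2 : D ^ 2 = ((n : ℝ) - 1) * ((1 - κ ^ 2) * R ^ 2) := by
    rw [hDdef, mul_pow, mul_pow, Real.sq_sqrt hn1, Real.sq_sqrt h1κ]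
    ring
  have hB : (S2 * T - a * t) ^ 2 ≤ (D * S2) ^ 2 := by
    calc (S2 * T - a * t) ^ 2 ≤ ((n : ℝ) * S2 - t ^ 2) * (S2 * X2 - a ^ 2) := key
      _ ≤ (((n : ℝ) - 1) * S2) * ((1 - κ ^ 2) * R ^ 2 * S2) := mul_le_mul b1 b3 b4 (by positivity)
      _ = (D * S2) ^ 2 := by rw [mul_pow, hD2]; ring
  have hTD : a * t - S2 * T ≤ D * S2 := by
    have h := Real.sqrt_le_sqrt hB
    rw [Real.sqrt_sq_eq_abs, Real.sqrt_sq (mul_nonneg hDnn hS2nn)] at h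
    calc a * t - S2 * T ≤ |S2 * T - a * t| := by
          rw [abs_sub_comm]; exact le_abs_self _
      _ ≤ D * S2 := h
  -- a * t ≥ κ * R * S2
  have hP : κ * R * S2 ≤ a * t := by
    have hsq : Real.sqrt S2 ^ 2 = S2 := Real.sq_sqrt hS2nn
    have hspos : 0 < Real.sqrt S2 := Real.sqrt_pos.mpr hS2pos
    have hsL : Real.sqrt S2 ≤ L := by
      have h := Real.sqrt_le_sqrt hS2L
      rwa [Real.sqrt_sq hL.le] at h
    have hts : Real.sqrt S2 ≤ t := by
      have h := Real.sqrt_le_sqrt hS2t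
      rwa [Real.sqrt_sq ht_nn] at h
    have h1 : (μ * R) * Real.sqrt S2 ≤ a * t :=
      mul_le_mul hdot hts hspos.le ha_pos.le
    have h2 : κ * R * S2 ≤ μ * R * Real.sqrt S2 := by
      rw [hκ, div_mul_eq_mul_div, div_mul_eq_mul_div, div_le_iff₀ hL]
      have hss : S2 ≤ Real.sqrt S2 * L := by
        have := mul_le_mul_of_nonneg_left hsL (Real.sqrt_nonneg S2)
        calc S2 = Real.sqrt S2 * Real.sqrt S2 := (Real.mul_self_sqrt hS2nn).symm
          _ ≤ Real.sqrt S2 * L := this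
      have h3 := mul_le_mul_of_nonneg_left hss (mul_pos hμ hR).le
      calc μ * R * S2 ≤ μ * R * (Real.sqrt S2 * L) := h3
        _ = μ * R * Real.sqrt S2 * L := by ring
    linarith only [h1, h2]
  have hfin : (κ * R - D) * S2 ≤ T * S2 := by
    have e : (κ * R - D) * S2 = κ * R * S2 - D * S2 := by ring
    have e2 : T * S2 = S2 * T := by ring
    linarith only [hTD, hP, e, e2]
  have := le_of_mul_le_mul_right hfin hS2pos
  have hrw : (κ - Real.sqrt ((n : ℝ) - 1) * Real.sqrt (1 - κ ^ 2)) * R = κ * R - D := by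
    rw [hDdef]; ring
  linarith
end

section
/- Let n ≥ 1, R > 0, L > μ > 0, κ = μ/L. Define x* ∈ ℝⁿ by x*₁ = κR and x*ⱼ = -√((1-κ²)/(n-1))·R for j = 2,...,n (when n ≥ 2), and σ* = (L, 0, ..., 0). Then ‖x*‖₂ = R, ‖σ*‖₂ = L, ⟨σ*, x*⟩ = μR, the coordinates of σ* are nonincreasing and nonnegative, and ∑_{i=1}^n x*ᵢ = (κ - √(n-1)·√(1-κ²))·R. -/
open Finset

/-!
Both vectors take one value at the first coordinate and another at the remaining `n - 1`, so every
sum collapses to `head + (n - 1) * tail`. The `n - 1` tail coordinates of `x*` carry squared mass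
`(1 - κ²) R²`, which with the head `κ R` gives `‖x*‖₂ = R`, and total mass `√(n - 1) √(1 - κ²) R`;
`σ*` sees only the head.
-/

theorem Fin.sum_ite_val_eq_zero {R : Type*} [CommRing R] {n : ℕ} (hn : 0 < n) (a b : R) :
    ∑ i : Fin n, (if (i : ℕ) = 0 then a else b) = a + ((n : R) - 1) * b := by
  obtain ⟨m, rfl⟩ := Nat.exists_eq_succ_of_ne_zero hn.ne'
  simp [Fin.sum_univ_succ]

theorem Fin.antitone_ite_val_eq_zero {α : Type*} [Preorder α] {n : ℕ} {a b : α} (hba : b ≤ a) :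
    Antitone fun i : Fin n => if (i : ℕ) = 0 then a else b := by
  intro i j hij
  have hij' : (i : ℕ) ≤ j := hij
  dsimp only
  split_ifs <;> first | exact le_rfl | exact hba | omega

theorem Real.mul_sqrt_div_self {t : ℝ} (ht : 0 ≤ t) (c : ℝ) :
    t * √(c / t) = √t * √c := by
  rw [Real.sqrt_div' c ht, mul_div_left_comm, Real.div_sqrt, mul_comm]

theorem Real.mul_sqrt_div_self_sq {t c : ℝ} (ht : 0 < t) (hc : 0 ≤ c) :
    t * √(c / t) ^ 2 = c := by
  rw [Real.sq_sqrt (div_nonneg hc ht.le), mul_div_cancel₀ c ht.ne']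

theorem spectral_descent_lower_bound_tightness
    (n : ℕ) (hn : 2 ≤ n) (R L μ : ℝ) (hR : 0 < R) (hμ : 0 < μ) (hμL : μ < L)
    (κ : ℝ) (hκ : κ = μ / L)
    (x σ : Fin n → ℝ)
    (hx : x = fun i : Fin n => if (i : ℕ) = 0 then κ * R
      else -Real.sqrt ((1 - κ ^ 2) / ((n : ℝ) - 1)) * R)
    (hσ : σ = fun i : Fin n => if (i : ℕ) = 0 then L else 0) :
    Real.sqrt (∑ i, x i ^ 2) = R ∧
    Real.sqrt (∑ i, σ i ^ 2) = L ∧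
    (∑ i, σ i * x i) = μ * R ∧
    (∀ i j : Fin n, i ≤ j → σ j ≤ σ i) ∧
    (∀ i, 0 ≤ σ i) ∧
    (∑ i, x i) = (κ - Real.sqrt ((n : ℝ) - 1) * Real.sqrt (1 - κ ^ 2)) * R := by
  have hL : 0 < L := hμ.trans hμL
  have hκ_sq : 0 ≤ 1 - κ ^ 2 := by
    have : κ < 1 := hκ ▸ (div_lt_one hL).mpr hμL
    nlinarith [div_pos hμ hL]
  have hn_pos : 0 < n := by omega
  have htail : (0 : ℝ) < (n : ℝ) - 1 := by
    have : (2 : ℝ) ≤ n := by exact_mod_cast hn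
    linarith
  subst hx hσ
  simp only [ite_pow, apply_ite₂ (· * ·), Fin.sum_ite_val_eq_zero hn_pos]
  refine ⟨?_, ?_, ?_, Fin.antitone_ite_val_eq_zero hL.le, fun i => ?_, ?_⟩
  · have tail_sq := Real.mul_sqrt_div_self_sq htail hκ_sq
    refine (Real.sqrt_eq_iff_mul_self_eq_of_pos hR).mpr ?_
    linear_combination -R ^ 2 * tail_sq
  · exact (Real.sqrt_eq_iff_mul_self_eq_of_pos hL).mpr (by ring)
  · rw [hκ]
    field_simp
    ring
  · split_ifs <;> simp [hL.le]
  · have tail_sum := Real.mul_sqrt_div_self htail.le (1 - κ ^ 2)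
    linear_combination -R * tail_sum
end

section
/- Let Δ₀ > 0, C > 0, r̄ ≥ 1 with C ≤ √r̄, and define γ = max{C/√r̄, √(1 - C²/r̄)} ∈ (0,1] (assume γ < 1). Suppose a nonnegative sequence (Δₜ) satisfies Δ₀ ≤ Δ₀ and Δ²_{t+1} ≤ Δₜ² + ηₜ²·r̄ - 2ηₜ·C·Δₜ for all t, where ηₜ = (C/r̄)·γᵗ·Δ₀. Then Δₜ ≤ γᵗ·Δ₀ for all t ≥ 0. -/
/-!
With `a = C² / r̄` and `Bₜ = γᵗ Δ₀` the step size is `ηₜ = (a / C) Bₜ`, so the recursion reads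
`Δₜ₊₁² ≤ h(Δₜ)` for the convex quadratic `h(x) = x² - 2aBₜx + aBₜ²`. By induction `Δₜ ∈ [0, Bₜ]`, and a
convex function on an interval is bounded by its values at the endpoints, `h(0) = aBₜ²` and
`h(Bₜ) = (1 - a)Bₜ²`. Both are at most `γ²Bₜ²` because `γ = max √a √(1 - a)`, hence `Δₜ₊₁ ≤ γBₜ = Bₜ₊₁`.
-/

open Set

theorem quadratic_le_max_of_mem_Icc {𝕜 : Type*} [Field 𝕜] [LinearOrder 𝕜] [IsStrictOrderedRing 𝕜]
    {b c u v x : 𝕜} (hx : x ∈ Icc u v) :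
    x ^ 2 + b * x + c ≤ max (u ^ 2 + b * u + c) (v ^ 2 + b * v + c) := by
  have hconvex : ConvexOn 𝕜 univ fun y : 𝕜 => y ^ 2 + b * y + c :=
    (even_two.convexOn_pow.add ((LinearMap.mulLeft 𝕜 b).convexOn convex_univ)).add_const c
  exact hconvex.le_max_of_mem_Icc (mem_univ u) (mem_univ v) hx

theorem le_sq_max_sqrt (x y : ℝ) : x ≤ max √x √y ^ 2 :=
  calc x ≤ √x ^ 2 := Real.sq_sqrt' ▸ le_max_left x 0
    _ ≤ max √x √y ^ 2 := pow_le_pow_left₀ (Real.sqrt_nonneg x) (le_max_left _ _) 2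

theorem le_mul_of_sq_le_quadratic {a γ B x y : ℝ} (ha : a ≤ γ ^ 2) (ha' : 1 - a ≤ γ ^ 2)
    (hγ : 0 ≤ γ) (hx : x ∈ Icc 0 B) (hy : 0 ≤ y)
    (h : y ^ 2 ≤ x ^ 2 - 2 * a * B * x + a * B ^ 2) : y ≤ γ * B := by
  have hB : 0 ≤ B := hx.1.trans hx.2
  have hsq : y ^ 2 ≤ (γ * B) ^ 2 :=
    calc y ^ 2 ≤ x ^ 2 + -2 * a * B * x + a * B ^ 2 := by linarith
      _ ≤ max (0 ^ 2 + -2 * a * B * 0 + a * B ^ 2) (B ^ 2 + -2 * a * B * B + a * B ^ 2) :=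
          quadratic_le_max_of_mem_Icc hx
      _ = max (a * B ^ 2) ((1 - a) * B ^ 2) := by congr 1 <;> ring
      _ ≤ γ ^ 2 * B ^ 2 := max_le (by gcongr) (by gcongr)
      _ = (γ * B) ^ 2 := (mul_pow γ B 2).symm
  exact (pow_le_pow_iff_left₀ hy (mul_nonneg hγ hB) two_ne_zero).1 hsq

theorem spectral_descent_linear_convergence_recursion_general
    (C rbar : ℝ) (hrbar : 1 ≤ rbar) (hC : 0 < C)
    (γ : ℝ) (hγ : γ = max (C / Real.sqrt rbar) (Real.sqrt (1 - C ^ 2 / rbar)))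
    (Δ : ℕ → ℝ) (hΔnonneg : ∀ t, 0 ≤ Δ t)
    (η : ℕ → ℝ) (hη : ∀ t, η t = (C / rbar) * γ ^ t * Δ 0)
    (hrec : ∀ t, (Δ (t + 1)) ^ 2 ≤ (Δ t) ^ 2 + (η t) ^ 2 * rbar - 2 * η t * C * Δ t) :
    ∀ t : ℕ, Δ t ≤ γ ^ t * Δ 0 := by
  have hr : rbar ≠ 0 := (zero_lt_one.trans_le hrbar).ne'
  set a := C ^ 2 / rbar with ha
  replace hγ : γ = max √a √(1 - a) := by
    rw [hγ, Real.sqrt_div (sq_nonneg C), Real.sqrt_sq hC.le]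
  have hγ0 : 0 ≤ γ := hγ ▸ le_max_of_le_left (Real.sqrt_nonneg a)
  have haγ : a ≤ γ ^ 2 := hγ ▸ le_sq_max_sqrt a (1 - a)
  have haγ' : 1 - a ≤ γ ^ 2 := hγ ▸ max_comm √(1 - a) √a ▸ le_sq_max_sqrt (1 - a) a
  intro t
  induction t with
  | zero => simp
  | succ t ih =>
    have hstep : Δ (t + 1) ^ 2 ≤
        Δ t ^ 2 - 2 * a * (γ ^ t * Δ 0) * Δ t + a * (γ ^ t * Δ 0) ^ 2 := by
      convert hrec t using 1
      rw [hη, ha]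
      field_simp
      ring
    calc Δ (t + 1) ≤ γ * (γ ^ t * Δ 0) :=
          le_mul_of_sq_le_quadratic haγ haγ' hγ0 ⟨hΔnonneg t, ih⟩ (hΔnonneg _) hstep
      _ = γ ^ (t + 1) * Δ 0 := by ring

theorem spectral_descent_linear_convergence_recursion
    (C rbar : ℝ) (hrbar : 1 ≤ rbar) (hC : 0 < C) (hCr : C ≤ Real.sqrt rbar)
    (γ : ℝ) (hγ : γ = max (C / Real.sqrt rbar) (Real.sqrt (1 - C ^ 2 / rbar)))
    (hγlt : γ < 1)
    (Δ : ℕ → ℝ) (hΔpos : 0 < Δ 0) (hΔnonneg : ∀ t, 0 ≤ Δ t)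
    (η : ℕ → ℝ) (hη : ∀ t, η t = (C / rbar) * γ ^ t * Δ 0)
    (hrec : ∀ t, (Δ (t + 1)) ^ 2 ≤ (Δ t) ^ 2 + (η t) ^ 2 * rbar - 2 * η t * C * Δ t) :
    ∀ t : ℕ, Δ t ≤ γ ^ t * Δ 0 :=
  spectral_descent_linear_convergence_recursion_general C rbar hrbar hC γ hγ Δ hΔnonneg η hη hrec
end

section
/- Let X* ∈ ℝ^(n₁×n₂) be a matrix of rank r* with compact SVD X* = UΣVᵀ. For any H ∈ ℝ^(n₁×n₂), letting H_T and H_{T⊥} denote the orthogonal projections of H onto the tangent space T = {UAᵀ + BVᵀ} at X* and its orthogonal complement respectively, we have ‖X* + H‖_* ≥ ‖X*‖_* + ‖H_{T⊥}‖_* - ‖H_T‖_*. -/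
/-!
Duality: `tr(Zᵀ M) ≤ ‖M‖_*` whenever `‖Z‖₂ ≤ 1`, with equality when `Z = W` is the polar factor
of `M`, which lives on the row and column spaces of `M`. For `M = H_{T⊥}` this gives `Uᵀ W = 0`
and `W V = 0`, so `Z = U Vᵀ + W` is again a contraction: a subgradient of `‖·‖_*` at `X*`.
Testing `X* + H = X* + H_T + H_{T⊥}` against `Z` gives `tr(Zᵀ X*) = tr Σ ≥ ‖X*‖_*`,
`tr(Zᵀ H_{T⊥}) = ‖H_{T⊥}‖_*` and `tr(Zᵀ H_T) = tr(V Uᵀ H_T) ≥ -‖H_T‖_*`.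
-/

open Finset Matrix

/-- The nuclear norm of a real matrix: the sum of its singular values,
computed as the square roots of the eigenvalues of `Mᴴ * M`. -/
noncomputable def nuclearNorm {n₁ n₂ : ℕ} (M : Matrix (Fin n₁) (Fin n₂) ℝ) : ℝ :=
  ∑ i, Real.sqrt ((Matrix.isHermitian_conjTranspose_mul_self M).eigenvalues i)

namespace Matrix

variable {k l m n : Type*} [Fintype m] [Fintype n]

theorem mulVec_dotProduct_mulVec [Fintype l] (A : Matrix l m ℝ) (B : Matrix l n ℝ) (x : m → ℝ)
    (y : n → ℝ) :
    A *ᵥ x ⬝ᵥ B *ᵥ y = x ⬝ᵥ (Aᵀ * B) *ᵥ y := by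
  rw [dotProduct_mulVec, ← vecMul_transpose, vecMul_vecMul, ← dotProduct_mulVec]

/-- `‖A‖₂ ≤ 1` for the spectral norm. -/
def IsContraction (A : Matrix m n ℝ) : Prop :=
  ∀ x : n → ℝ, A *ᵥ x ⬝ᵥ A *ᵥ x ≤ x ⬝ᵥ x

namespace IsContraction

theorem zero : IsContraction (0 : Matrix m n ℝ) := fun x => by
  simpa using dotProduct_self_star_nonneg x

theorem neg {A : Matrix m n ℝ} (hA : IsContraction A) : IsContraction (-A) := fun x => by
  simpa [neg_mulVec] using hA x

theorem mul [Fintype l] {A : Matrix l m ℝ} {B : Matrix m n ℝ} (hA : IsContraction A)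
    (hB : IsContraction B) : IsContraction (A * B) := fun x => by
  simpa only [← mulVec_mulVec] using (hA (B *ᵥ x)).trans (hB x)

theorem of_transpose_mul_self_eq_diagonal [DecidableEq n] {A : Matrix m n ℝ} {d : n → ℝ}
    (hA : Aᵀ * A = diagonal d) (hd : ∀ i, d i ≤ 1) : IsContraction A := fun x => by
  rw [mulVec_dotProduct_mulVec, hA]
  simp only [dotProduct, mulVec_diagonal]
  exact sum_le_sum fun i _ => by nlinarith [hd i, mul_self_nonneg (x i)]

theorem of_transpose_mul_self_eq_one [DecidableEq n] {A : Matrix m n ℝ} (hA : Aᵀ * A = 1) :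
    IsContraction A :=
  of_transpose_mul_self_eq_diagonal (d := 1) hA fun _ => le_rfl

theorem transpose_mul_mul_apply_le {A : Matrix m l ℝ} {G : Matrix m n ℝ} (hG : IsContraction G)
    (B : Matrix n l ℝ) (i j : l) :
    (Aᵀ * G * B) i j ≤ √((Aᵀ * A) i i) * √((Bᵀ * B) j j) := by
  have hcs := Real.sum_mul_le_sqrt_mul_sqrt univ (fun k => A k i) (G *ᵥ fun k => B k j)
  calc (Aᵀ * G * B) i j = ∑ k, A k i * (G *ᵥ fun k => B k j) k := by
        rw [Matrix.mul_assoc]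
        simp only [mul_apply, mulVec, dotProduct, transpose_apply]
    _ ≤ √(∑ k, A k i ^ 2) * √(∑ k, (G *ᵥ fun k => B k j) k ^ 2) := hcs
    _ ≤ √((Aᵀ * A) i i) * √((Bᵀ * B) j j) := by
        gcongr
        · simp [mul_apply, sq]
        · simpa [mul_apply, sq, dotProduct] using hG fun k => B k j

end IsContraction

theorem isContraction_mul_transpose_add [Fintype k] [DecidableEq k] {U : Matrix m k ℝ}
    {V : Matrix n k ℝ} {W : Matrix m n ℝ} (hU : Uᵀ * U = 1) (hV : Vᵀ * V = 1)
    (hUW : Uᵀ * W = 0) (hWV : W * V = 0) (hW : IsContraction W) :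
    IsContraction (U * Vᵀ + W) := by
  intro x
  set y := Vᵀ *ᵥ x
  set w := x - V *ᵥ y
  have hx : x = V *ᵥ y + w := by simp [w]
  have hWw : W *ᵥ w = W *ᵥ x := by rw [mulVec_sub, mulVec_mulVec, hWV, zero_mulVec, sub_zero]
  have hZx : (U * Vᵀ + W) *ᵥ x = U *ᵥ y + W *ᵥ w := by rw [add_mulVec, hWw, ← mulVec_mulVec]
  have hVw : Vᵀ *ᵥ w = 0 := by rw [mulVec_sub, mulVec_mulVec, hV, one_mulVec, sub_self]
  have hUy : U *ᵥ y ⬝ᵥ U *ᵥ y = y ⬝ᵥ y := by rw [mulVec_dotProduct_mulVec, hU, one_mulVec]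
  have hVy : V *ᵥ y ⬝ᵥ V *ᵥ y = y ⬝ᵥ y := by rw [mulVec_dotProduct_mulVec, hV, one_mulVec]
  have hUyWw : U *ᵥ y ⬝ᵥ W *ᵥ w = 0 := by
    rw [mulVec_dotProduct_mulVec, hUW, zero_mulVec, dotProduct_zero]
  have hVyw : V *ᵥ y ⬝ᵥ w = 0 := by
    rw [dotProduct_comm, dotProduct_mulVec, ← mulVec_transpose, hVw, zero_dotProduct]
  rw [hZx]
  conv_rhs => rw [hx]
  simp only [add_dotProduct, dotProduct_add, dotProduct_comm (W *ᵥ w), dotProduct_comm w]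
  linarith [hW w]

theorem isContraction_mul_transpose [Fintype k] [DecidableEq k] {U : Matrix m k ℝ}
    {V : Matrix n k ℝ} (hU : Uᵀ * U = 1) (hV : Vᵀ * V = 1) : IsContraction (U * Vᵀ) := by
  simpa using isContraction_mul_transpose_add hU hV (W := 0) (by simp) (by simp)
    IsContraction.zero

theorem transpose_mul_mul_transpose_add_mul [Fintype k] [DecidableEq k] {U : Matrix m k ℝ}
    {V : Matrix n k ℝ} {W : Matrix m n ℝ} (hU : Uᵀ * U = 1) (hV : Vᵀ * V = 1)
    (hUW : Uᵀ * W = 0) : Uᵀ * (U * Vᵀ + W) * V = 1 := by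
  rw [Matrix.mul_add, Matrix.add_mul, hUW, ← Matrix.mul_assoc, hU, Matrix.one_mul, hV]
  simp

theorem exists_orthogonal_transpose_mul_self_eq [DecidableEq n] (M : Matrix m n ℝ) :
    ∃ Q : Matrix n n ℝ, Qᵀ * Q = 1 ∧ Q * Qᵀ = 1 ∧
      (M * Q)ᵀ * (M * Q) = diagonal (isHermitian_conjTranspose_mul_self M).eigenvalues := by
  set hM := isHermitian_conjTranspose_mul_self M
  set Q : Matrix n n ℝ := (hM.eigenvectorUnitary : Matrix n n ℝ)
  have hQ : Qᵀ * Q = 1 := by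
    simpa [Q, star_eq_conjTranspose] using Unitary.coe_star_mul_self hM.eigenvectorUnitary
  refine ⟨Q, hQ, ?_, ?_⟩
  · simpa [Q, star_eq_conjTranspose] using Unitary.coe_mul_star_self hM.eigenvectorUnitary
  · have hMM : Mᵀ * M = Q * diagonal hM.eigenvalues * Qᵀ := by
      simpa [Q, star_eq_conjTranspose, Function.comp_def] using hM.spectral_theorem
    rw [transpose_mul, Matrix.mul_assoc, ← Matrix.mul_assoc Mᵀ, hMM]
    simp only [← Matrix.mul_assoc, hQ, Matrix.one_mul]
    rw [Matrix.mul_assoc, hQ, Matrix.mul_one]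

theorem trace_transpose_mul_mul_diagonal_mul_transpose [Fintype k] [DecidableEq k]
    (G : Matrix m n ℝ) (U : Matrix m k ℝ) (S : k → ℝ) (V : Matrix n k ℝ) :
    (Gᵀ * (U * diagonal S * Vᵀ)).trace = ∑ i, S i * (Uᵀ * G * V) i i := by
  calc (Gᵀ * (U * diagonal S * Vᵀ)).trace = (Vᵀ * (Gᵀ * (U * diagonal S))).trace := by
        rw [← Matrix.mul_assoc, trace_mul_comm]
    _ = ((Uᵀ * G * V)ᵀ * diagonal S).trace := by
        simp only [transpose_mul, transpose_transpose, Matrix.mul_assoc]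
    _ = ∑ i, S i * (Uᵀ * G * V) i i := by
        simp only [trace, diag_apply, mul_diagonal, transpose_apply, mul_comm]

theorem trace_transpose_mul_mul_add_mul_transpose_eq_zero [Fintype k] {U : Matrix m k ℝ}
    {V : Matrix n k ℝ} {W : Matrix m n ℝ} (hUW : Uᵀ * W = 0) (hWV : W * V = 0)
    (A : Matrix k n ℝ) (B : Matrix m k ℝ) : (Wᵀ * (U * A + B * Vᵀ)).trace = 0 := by
  have hWU : Wᵀ * U = 0 := by simpa using congrArg transpose hUW
  rw [Matrix.mul_add, trace_add, ← Matrix.mul_assoc, ← Matrix.mul_assoc, trace_mul_comm _ Vᵀ,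
    ← Matrix.mul_assoc, ← transpose_mul, hWU, hWV]
  simp

section TangentSpace

variable [Fintype k] {U : Matrix m k ℝ} {V : Matrix n k ℝ}

/-- `H_T`, the projection of `H` onto the tangent space `{U Aᵀ + B Vᵀ}`. -/
def tangentProj (U : Matrix m k ℝ) (V : Matrix n k ℝ) (H : Matrix m n ℝ) : Matrix m n ℝ :=
  U * Uᵀ * H + H * (V * Vᵀ) - U * Uᵀ * H * (V * Vᵀ)

/-- `H_{T⊥}`, the projection of `H` onto the orthogonal complement of the tangent space. -/
def normalProj [DecidableEq m] [DecidableEq n] (U : Matrix m k ℝ) (V : Matrix n k ℝ)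
    (H : Matrix m n ℝ) : Matrix m n ℝ :=
  (1 - U * Uᵀ) * H * (1 - V * Vᵀ)

theorem tangentProj_eq (H : Matrix m n ℝ) :
    tangentProj U V H = U * (Uᵀ * H) + (H * V - U * Uᵀ * H * V) * Vᵀ := by
  simp only [tangentProj, Matrix.sub_mul, Matrix.mul_assoc]
  abel

theorem trace_transpose_mul_tangentProj_eq_zero {W : Matrix m n ℝ} (hUW : Uᵀ * W = 0)
    (hWV : W * V = 0) (H : Matrix m n ℝ) : (Wᵀ * tangentProj U V H).trace = 0 := by
  rw [tangentProj_eq]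
  exact trace_transpose_mul_mul_add_mul_transpose_eq_zero hUW hWV _ _

theorem tangentProj_add_normalProj [DecidableEq m] [DecidableEq n] (H : Matrix m n ℝ) :
    tangentProj U V H + normalProj U V H = H := by
  simp only [tangentProj, normalProj, Matrix.sub_mul, Matrix.mul_sub, Matrix.one_mul,
    Matrix.mul_one]
  abel

theorem transpose_mul_normalProj [DecidableEq m] [DecidableEq n] [DecidableEq k]
    (hU : Uᵀ * U = 1) (H : Matrix m n ℝ) : Uᵀ * normalProj U V H = 0 := by
  have hUP : Uᵀ * (1 - U * Uᵀ) = 0 := by rw [Matrix.mul_sub, ← Matrix.mul_assoc, hU]; simp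
  rw [normalProj, ← Matrix.mul_assoc, ← Matrix.mul_assoc, hUP, Matrix.zero_mul, Matrix.zero_mul]

theorem normalProj_mul [DecidableEq m] [DecidableEq n] [DecidableEq k] (hV : Vᵀ * V = 1)
    (H : Matrix m n ℝ) : normalProj U V H * V = 0 := by
  have hPV : (1 - V * Vᵀ) * V = 0 := by rw [Matrix.sub_mul, Matrix.mul_assoc, hV]; simp
  rw [normalProj, Matrix.mul_assoc, hPV, Matrix.mul_zero]

end TangentSpace

section NuclearNorm

variable {a b : ℕ}

theorem IsContraction.trace_transpose_mul_le_nuclearNorm {G : Matrix (Fin a) (Fin b) ℝ}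
    (hG : IsContraction G) (M : Matrix (Fin a) (Fin b) ℝ) :
    (Gᵀ * M).trace ≤ nuclearNorm M := by
  obtain ⟨Q, hQ, hQ', hMQ⟩ := exists_orthogonal_transpose_mul_self_eq M
  calc (Gᵀ * M).trace = ((M * Q)ᵀ * G * Q).trace := by
        rw [transpose_mul, trace_mul_comm (Qᵀ * Mᵀ * G) Q, ← Matrix.mul_assoc, ← Matrix.mul_assoc,
          hQ', Matrix.one_mul, ← trace_transpose (Mᵀ * G), transpose_mul, transpose_transpose]
    _ ≤ ∑ i, √(((M * Q)ᵀ * (M * Q)) i i) * √((Qᵀ * Q) i i) :=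
        sum_le_sum fun i _ => hG.transpose_mul_mul_apply_le Q i i
    _ = nuclearNorm M := by simp only [hMQ, hQ]; simp [nuclearNorm]

theorem IsContraction.neg_nuclearNorm_le_trace_transpose_mul {G : Matrix (Fin a) (Fin b) ℝ}
    (hG : IsContraction G) (M : Matrix (Fin a) (Fin b) ℝ) : -nuclearNorm M ≤ (Gᵀ * M).trace := by
  have := hG.neg.trace_transpose_mul_le_nuclearNorm M
  rw [transpose_neg, Matrix.neg_mul, trace_neg] at this
  linarith

theorem exists_isContraction_trace_eq_nuclearNorm (M : Matrix (Fin a) (Fin b) ℝ) :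
    ∃ G : Matrix (Fin a) (Fin b) ℝ, IsContraction G ∧ (Gᵀ * M).trace = nuclearNorm M ∧
      (∃ K : Matrix (Fin b) (Fin b) ℝ, G = M * K) ∧ ∃ L : Matrix (Fin a) (Fin a) ℝ, G = L * M := by
  obtain ⟨Q, hQ, hQ', hN⟩ := exists_orthogonal_transpose_mul_self_eq M
  set N := M * Q
  set d := (isHermitian_conjTranspose_mul_self M).eigenvalues
  set s : Fin b → ℝ := fun i => √(d i)
  have hd : d = s * s := funext fun i => (Real.mul_self_sqrt
    ((posSemidef_conjTranspose_mul_self M).eigenvalues_nonneg i)).symm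
  -- Since `(√0)⁻¹ = 0`, `N * diagonal s⁻¹ * Qᵀ = M (Mᵀ M)^(-1/2)` is the partial isometry of the
  -- polar decomposition of `M`, extended by `0` on `ker M`.
  set g := s⁻¹
  refine ⟨N * diagonal g * Qᵀ, ?_, ?_, ⟨Q * diagonal g * Qᵀ, ?_⟩,
    ⟨N * diagonal (g * g * g) * Nᵀ, ?_⟩⟩
  · have hNg : (N * diagonal g)ᵀ * (N * diagonal g) = diagonal (g * d * g) := by
      rw [transpose_mul, diagonal_transpose, Matrix.mul_assoc, ← Matrix.mul_assoc Nᵀ, hN,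
        diagonal_mul_diagonal, diagonal_mul_diagonal]
      simp only [Pi.mul_def, mul_assoc]
    refine (IsContraction.of_transpose_mul_self_eq_diagonal hNg fun i => ?_).mul
      (IsContraction.of_transpose_mul_self_eq_one (by rwa [transpose_transpose]))
    simp only [hd, g, Pi.mul_apply, Pi.inv_apply]
    rw [← mul_assoc, inv_mul_mul_self]
    exact mul_inv_le_one
  · calc ((N * diagonal g * Qᵀ)ᵀ * M).trace = (diagonal g * (Nᵀ * N)).trace := by
          rw [transpose_mul, transpose_mul, transpose_transpose, diagonal_transpose,
            Matrix.mul_assoc, Matrix.mul_assoc, trace_mul_comm Q]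
          simp only [N, Matrix.mul_assoc]
      _ = ∑ i, g i * d i := by rw [hN, diagonal_mul_diagonal, trace_diagonal]
      _ = nuclearNorm M := sum_congr rfl fun i _ => by
          rw [hd, Pi.mul_apply, ← mul_assoc]; exact inv_mul_mul_self _
  · simp only [N, Matrix.mul_assoc]
  · have hM : N * Qᵀ = M := by simp only [N, Matrix.mul_assoc, hQ', Matrix.mul_one]
    have hg : g * g * g * d = g := funext fun i => by
      by_cases h : s i = 0
      · simp [g, h]
      · simp only [hd, g, Pi.mul_apply, Pi.inv_apply]; field_simp
    symm
    calc N * diagonal (g * g * g) * Nᵀ * M = N * diagonal (g * g * g) * (Nᵀ * N) * Qᵀ := by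
          rw [← hM]; simp only [Matrix.mul_assoc]
      _ = N * diagonal g * Qᵀ := by
          rw [hN, Matrix.mul_assoc N, diagonal_mul_diagonal, ← Pi.mul_def, hg]

theorem nuclearNorm_mul_diagonal_mul_transpose_le {r : ℕ} {U : Matrix (Fin a) (Fin r) ℝ}
    {V : Matrix (Fin b) (Fin r) ℝ} {S : Fin r → ℝ} (hU : Uᵀ * U = 1) (hV : Vᵀ * V = 1)
    (hS : ∀ i, 0 ≤ S i) : nuclearNorm (U * diagonal S * Vᵀ) ≤ ∑ i, S i := by
  obtain ⟨G, hG, hGtr, -⟩ := exists_isContraction_trace_eq_nuclearNorm (U * diagonal S * Vᵀ)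
  rw [← hGtr, trace_transpose_mul_mul_diagonal_mul_transpose]
  refine sum_le_sum fun i _ => mul_le_of_le_one_right (hS i) ?_
  simpa [hU, hV] using hG.transpose_mul_mul_apply_le (A := U) V i i

theorem exists_isContraction_subgradient {r : ℕ} {U : Matrix (Fin a) (Fin r) ℝ}
    {V : Matrix (Fin b) (Fin r) ℝ} (hU : Uᵀ * U = 1) (hV : Vᵀ * V = 1)
    (H : Matrix (Fin a) (Fin b) ℝ) :
    ∃ Z : Matrix (Fin a) (Fin b) ℝ, IsContraction Z ∧ Uᵀ * Z * V = 1 ∧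
      (Zᵀ * normalProj U V H).trace = nuclearNorm (normalProj U V H) ∧
      (Zᵀ * tangentProj U V H).trace = ((U * Vᵀ)ᵀ * tangentProj U V H).trace := by
  obtain ⟨W, hW, hWtr, ⟨K, hWK⟩, ⟨L, hWL⟩⟩ :=
    exists_isContraction_trace_eq_nuclearNorm (normalProj U V H)
  have hUW : Uᵀ * W = 0 := by
    rw [hWK, ← Matrix.mul_assoc, transpose_mul_normalProj hU, Matrix.zero_mul]
  have hWV : W * V = 0 := by rw [hWL, Matrix.mul_assoc, normalProj_mul hV, Matrix.mul_zero]
  refine ⟨U * Vᵀ + W, isContraction_mul_transpose_add hU hV hUW hWV hW,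
    transpose_mul_mul_transpose_add_mul hU hV hUW, ?_, ?_⟩
  · rw [transpose_add, Matrix.add_mul, trace_add, hWtr, transpose_mul, transpose_transpose,
      Matrix.mul_assoc, transpose_mul_normalProj hU]
    simp
  · rw [transpose_add, Matrix.add_mul, trace_add,
      trace_transpose_mul_tangentProj_eq_zero hUW hWV, add_zero]

end NuclearNorm

end Matrix

theorem nuclear_norm_tangent_space_lower_bound_general
    (n₁ n₂ r : ℕ)
    (Xstar : Matrix (Fin n₁) (Fin n₂) ℝ)
    (U : Matrix (Fin n₁) (Fin r) ℝ) (V : Matrix (Fin n₂) (Fin r) ℝ)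
    (S : Fin r → ℝ) (hS : ∀ i, 0 < S i)
    (hU : Uᵀ * U = 1) (hV : Vᵀ * V = 1)
    (hX : Xstar = U * Matrix.diagonal S * Vᵀ)
    (H HT HTperp : Matrix (Fin n₁) (Fin n₂) ℝ)
    (hHT : HT = U * Uᵀ * H + H * (V * Vᵀ) - U * Uᵀ * H * (V * Vᵀ))
    (hHTperp : HTperp = (1 - U * Uᵀ) * H * (1 - V * Vᵀ)) :
    nuclearNorm Xstar + nuclearNorm HTperp - nuclearNorm HT ≤ nuclearNorm (Xstar + H) := by
  have hHT : HT = tangentProj U V H := hHT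
  have hHTperp : HTperp = normalProj U V H := hHTperp
  subst hHT hHTperp
  obtain ⟨Z, hZ, hUZV, hZHp, hZHT⟩ := exists_isContraction_subgradient hU hV H
  have hZX : nuclearNorm Xstar ≤ (Zᵀ * Xstar).trace := by
    rw [hX, trace_transpose_mul_mul_diagonal_mul_transpose, hUZV]
    simpa using nuclearNorm_mul_diagonal_mul_transpose_le hU hV fun i => (hS i).le
  have hUVHT : -nuclearNorm (tangentProj U V H) ≤ ((U * Vᵀ)ᵀ * tangentProj U V H).trace :=
    (isContraction_mul_transpose hU hV).neg_nuclearNorm_le_trace_transpose_mul _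
  have hZXH : (Zᵀ * (Xstar + H)).trace = (Zᵀ * Xstar).trace +
      (Zᵀ * tangentProj U V H).trace + (Zᵀ * normalProj U V H).trace := by
    conv_lhs => rw [← tangentProj_add_normalProj (U := U) (V := V) H]
    rw [Matrix.mul_add, Matrix.mul_add, trace_add, trace_add, add_assoc]
  linarith [hZ.trace_transpose_mul_le_nuclearNorm (Xstar + H)]

theorem nuclear_norm_tangent_space_lower_bound
    (n₁ n₂ r : ℕ)
    (Xstar : Matrix (Fin n₁) (Fin n₂) ℝ)
    (U : Matrix (Fin n₁) (Fin r) ℝ) (V : Matrix (Fin n₂) (Fin r) ℝ)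
    (S : Fin r → ℝ) (hS : ∀ i, 0 < S i)
    (hU : Uᵀ * U = 1) (hV : Vᵀ * V = 1)
    (hX : Xstar = U * Matrix.diagonal S * Vᵀ)
    (hrank : Xstar.rank = r)
    (H HT HTperp : Matrix (Fin n₁) (Fin n₂) ℝ)
    (hHT : HT = U * Uᵀ * H + H * (V * Vᵀ) - U * Uᵀ * H * (V * Vᵀ))
    (hHTperp : HTperp = (1 - U * Uᵀ) * H * (1 - V * Vᵀ)) :
    nuclearNorm Xstar + nuclearNorm HTperp - nuclearNorm HT ≤ nuclearNorm (Xstar + H) :=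
  nuclear_norm_tangent_space_lower_bound_general n₁ n₂ r Xstar U V S hS hU hV hX H HT HTperp hHT
    hHTperp
end

section
/- Let (Δₜ)_{t≥0} be a nonnegative sequence satisfying Δ_{t+1} ≤ (1 - γₜ)Δₜ + K·γₜ^(3/2) for all t ≥ 0, where γₜ = 2/(t+3) and K > 0. Then for every T ≥ 1, Δ_T ≤ 2Δ₀/((T+2)(T+1)) + K·(4√2/3)·(T+3)^(3/2)/((T+2)(T+1)). -/
/-!
Multiplying the recursion by `w (t+1) = (t+3)(t+2)` turns the contraction factor `1 - γₜ` into
`w t / w (t+1)`, so `w t Δₜ` grows by at most `w (t+1) K γₜ^(3/2) ≤ 2√2 K √(t+3)` per step.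
Since `√x ≤ ∫ₓ^{x+1} √y dy = (2/3)((x+1)^(3/2) - x^(3/2))`, these increments telescope to at most
`K (4√2/3) (T+3)^(3/2)`.
-/

open Finset Real

lemma rpow_three_halves_eq_mul_sqrt {x : ℝ} (hx : 0 ≤ x) : x ^ ((3 : ℝ) / 2) = x * √x := by
  rw [sqrt_eq_rpow, ← rpow_one_add' hx (by norm_num)]
  norm_num

lemma mul_le_add_sum_of_le_one_sub_mul_add {a b γ w : ℕ → ℝ} (hw : ∀ t, 0 ≤ w (t + 1))
    (hwγ : ∀ t, w (t + 1) * (1 - γ t) = w t) (h : ∀ t, a (t + 1) ≤ (1 - γ t) * a t + b t)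
    (T : ℕ) : w T * a T ≤ w 0 * a 0 + ∑ t ∈ range T, w (t + 1) * b t := by
  induction T with
  | zero => simp
  | succ T ih =>
    have hstep : w (T + 1) * a (T + 1) ≤ w T * a T + w (T + 1) * b T := by
      calc w (T + 1) * a (T + 1) ≤ w (T + 1) * ((1 - γ T) * a T + b T) :=
            mul_le_mul_of_nonneg_left (h T) (hw T)
        _ = w T * a T + w (T + 1) * b T := by rw [← hwγ T]; ring
    rw [sum_range_succ]
    linarith

lemma sqrt_le_two_thirds_mul_rpow_sub {x : ℝ} (hx : 0 ≤ x) :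
    √x ≤ 2 / 3 * ((x + 1) ^ ((3 : ℝ) / 2) - x ^ ((3 : ℝ) / 2)) := by
  rw [rpow_three_halves_eq_mul_sqrt hx, rpow_three_halves_eq_mul_sqrt (by linarith)]
  set s := √x
  set u := √(x + 1)
  have hs : 0 ≤ s := sqrt_nonneg x
  have hs2 : s ^ 2 = x := sq_sqrt hx
  have hu2 : u ^ 2 = x + 1 := sq_sqrt (by linarith)
  have hsu : s ≤ u := sqrt_le_sqrt (by linarith)
  -- `(u - s)(u + s) = 1` and `2(u² + us + s²) - 3s(u + s) = (u - s)(2u + s)`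
  nlinarith [mul_nonneg (sub_nonneg.2 hsu) (by linarith : 0 ≤ 2 * u + s), mul_nonneg hs (sub_nonneg.2 hsu)]

lemma mul_sub_one_mul_two_div_rpow_le {x : ℝ} (hx : 0 < x) :
    x * (x - 1) * (2 / x) ^ ((3 : ℝ) / 2) ≤
      4 * √2 / 3 * ((x + 1) ^ ((3 : ℝ) / 2) - x ^ ((3 : ℝ) / 2)) := by
  have hsx : 0 < √x := sqrt_pos.2 hx
  have hratio : (x - 1) / √x ≤ √x := by
    rw [div_le_iff₀ hsx, mul_self_sqrt hx.le]
    linarith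
  calc x * (x - 1) * (2 / x) ^ ((3 : ℝ) / 2) = 2 * √2 * ((x - 1) / √x) := by
        rw [rpow_three_halves_eq_mul_sqrt (by positivity), sqrt_div' _ hx.le]
        field_simp
    _ ≤ 2 * √2 * √x := by gcongr
    _ ≤ 2 * √2 * (2 / 3 * ((x + 1) ^ ((3 : ℝ) / 2) - x ^ ((3 : ℝ) / 2))) := by
      gcongr; exact sqrt_le_two_thirds_mul_rpow_sub hx.le
    _ = _ := by ring

theorem sublinear_convergence_recursion_general
    (Δ : ℕ → ℝ) (K : ℝ) (hK : 0 < K)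
    (hrec : ∀ t : ℕ, Δ (t + 1) ≤ (1 - 2 / ((t : ℝ) + 3)) * Δ t +
      K * (2 / ((t : ℝ) + 3)) ^ ((3 : ℝ) / 2)) :
    ∀ T : ℕ, 1 ≤ T →
      Δ T ≤ 2 * Δ 0 / (((T : ℝ) + 2) * ((T : ℝ) + 1)) +
        K * (4 * Real.sqrt 2 / 3) * ((T : ℝ) + 3) ^ ((3 : ℝ) / 2) /
          (((T : ℝ) + 2) * ((T : ℝ) + 1)) := by
  intro T _
  set F : ℕ → ℝ := fun t => ((t : ℝ) + 3) ^ ((3 : ℝ) / 2)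
  have hunrolled := mul_le_add_sum_of_le_one_sub_mul_add (w := fun t => ((t : ℝ) + 2) * (t + 1))
    (fun t => by positivity) (fun t => by push_cast; field_simp; ring) hrec T
  have hforcing : ∀ t ∈ range T, ((t + 1 : ℕ) + 2) * ((t + 1 : ℕ) + 1 : ℝ) *
      (K * (2 / ((t : ℝ) + 3)) ^ ((3 : ℝ) / 2)) ≤ K * (4 * √2 / 3) * (F (t + 1) - F t) := by
    intro t _
    calc ((t + 1 : ℕ) + 2) * ((t + 1 : ℕ) + 1 : ℝ) * (K * (2 / ((t : ℝ) + 3)) ^ ((3 : ℝ) / 2))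
        = K * ((t + 3) * (t + 3 - 1) * (2 / ((t : ℝ) + 3)) ^ ((3 : ℝ) / 2)) := by push_cast; ring
      _ ≤ K * (4 * √2 / 3 * ((t + 3 + 1) ^ ((3 : ℝ) / 2) - ((t : ℝ) + 3) ^ ((3 : ℝ) / 2))) :=
        mul_le_mul_of_nonneg_left (mul_sub_one_mul_two_div_rpow_le (by positivity)) hK.le
      _ = K * (4 * √2 / 3) * (F (t + 1) - F t) := by simp only [F]; push_cast; ring_nf
  have hsum := sum_le_sum hforcing
  rw [← mul_sum, sum_range_sub] at hsum
  have hF0 : 0 ≤ K * (4 * √2 / 3) * F 0 := by positivity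
  rw [← add_div, le_div_iff₀ (by positivity)]
  simp only [F, Nat.cast_zero] at hunrolled hsum hF0 ⊢
  linarith

theorem sublinear_convergence_recursion
    (Δ : ℕ → ℝ) (K : ℝ) (hK : 0 < K)
    (hnonneg : ∀ t, 0 ≤ Δ t)
    (hrec : ∀ t : ℕ, Δ (t + 1) ≤ (1 - 2 / ((t : ℝ) + 3)) * Δ t +
      K * (2 / ((t : ℝ) + 3)) ^ ((3 : ℝ) / 2)) :
    ∀ T : ℕ, 1 ≤ T →
      Δ T ≤ 2 * Δ 0 / (((T : ℝ) + 2) * ((T : ℝ) + 1)) +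
        K * (4 * Real.sqrt 2 / 3) * ((T : ℝ) + 3) ^ ((3 : ℝ) / 2) /
          (((T : ℝ) + 2) * ((T : ℝ) + 1)) :=
  sublinear_convergence_recursion_general Δ K hK hrec
end

section
/- Let z ∈ ℝ^m, b ∈ ℝ^m, ε > 0, and m ≥ 1. Define f(x) = (1/m)‖x - b‖₁ for x ∈ ℝ^m. Suppose v ∈ ℝ^m satisfies: vᵢ = sign(zᵢ - bᵢ)/m when |zᵢ - bᵢ| > ε, and vᵢ ∈ [-1/m, 1/m] when |zᵢ - bᵢ| ≤ ε. Then for all y ∈ ℝ^m, f(y) ≥ f(z) + ⟨y - z, v⟩ - 2ε. -/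
open Finset

theorem lad_approximate_subgradient_inequality
    (m : ℕ) (hm : 1 ≤ m) (z b : Fin m → ℝ) (ε : ℝ) (hε : 0 < ε)
    (f : (Fin m → ℝ) → ℝ) (hf : f = fun x => (1 / (m : ℝ)) * ∑ i, |x i - b i|)
    (v : Fin m → ℝ)
    (hv1 : ∀ i, ε < |z i - b i| → v i = Real.sign (z i - b i) / m)
    (hv2 : ∀ i, |z i - b i| ≤ ε → v i ∈ Set.Icc (-(1 / (m : ℝ))) (1 / (m : ℝ))) :
    ∀ y : Fin m → ℝ, f z + (∑ i, (y i - z i) * v i) - 2 * ε ≤ f y := by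
  subst hf
  intro y
  have hm0 : (0:ℝ) < m := by exact_mod_cast hm
  have key : ∀ i, |z i - b i| / m + (y i - z i) * v i - 2*ε/m ≤ |y i - b i| / m := by
    intro i
    by_cases h : ε < |z i - b i|
    · have hv := hv1 i h
      set s := Real.sign (z i - b i) with hs
      have hsz : s * (z i - b i) = |z i - b i| := by
        rcases lt_trichotomy (z i - b i) 0 with h' | h' | h'
        · rw [hs, Real.sign_of_neg h', abs_of_neg h']; ring
        · exfalso; rw [h', abs_zero] at h; linarith
        · rw [hs, Real.sign_of_pos h', abs_of_pos h']; ring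
      have hsy : s * (y i - b i) ≤ |y i - b i| := by
        have h1 : |s| ≤ 1 := by
          rcases lt_trichotomy (z i - b i) 0 with h' | h' | h'
          · rw [hs, Real.sign_of_neg h']; norm_num
          · rw [hs, h', Real.sign_zero]; norm_num
          · rw [hs, Real.sign_of_pos h']; norm_num
        calc s * (y i - b i) ≤ |s * (y i - b i)| := le_abs_self _
          _ = |s| * |y i - b i| := abs_mul _ _
          _ ≤ 1 * |y i - b i| := by
              exact mul_le_mul_of_nonneg_right h1 (abs_nonneg _)
          _ = |y i - b i| := one_mul _
      rw [hv]
      have hexp : (y i - z i) * (s / m) =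
          (s * (y i - b i)) / m - (s * (z i - b i)) / m := by ring
      rw [hexp, hsz]
      have h2em : 0 ≤ 2 * ε / m := by positivity
      have h3 : s * (y i - b i) / m ≤ |y i - b i| / m := by gcongr
      linarith
    · push_neg at h
      obtain ⟨hl, hr⟩ := hv2 i h
      have hvabs : |v i| ≤ 1 / m := abs_le.mpr ⟨hl, hr⟩
      have h1 : (y i - b i) * v i ≤ |y i - b i| / m := by
        calc (y i - b i) * v i ≤ |(y i - b i) * v i| := le_abs_self _
          _ = |y i - b i| * |v i| := abs_mul _ _
          _ ≤ |y i - b i| * (1/m) := mul_le_mul_of_nonneg_left hvabs (abs_nonneg _)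
          _ = |y i - b i| / m := by ring
      have h2 : -((z i - b i) * v i) ≤ ε / m := by
        calc -((z i - b i) * v i) ≤ |(z i - b i) * v i| := neg_le_abs _
          _ = |z i - b i| * |v i| := abs_mul _ _
          _ ≤ ε * (1/m) := mul_le_mul h hvabs (abs_nonneg _) hε.le
          _ = ε / m := by ring
      have h3 : |z i - b i| / m ≤ ε / m := by gcongr
      have hsplit : (y i - z i) * v i = (y i - b i) * v i - (z i - b i) * v i := by ring
      have h4 : 2*ε/(m:ℝ) = ε/m + ε/m := by ring
      linarith
  have hsum := Finset.sum_le_sum (fun i (_ : i ∈ Finset.univ) => key i)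
  have hc : ∑ _i : Fin m, 2*ε/m = 2*ε := by
    rw [Finset.sum_const, Finset.card_univ, Fintype.card_fin, nsmul_eq_mul]
    field_simp
  simp only [Finset.sum_sub_distrib, Finset.sum_add_distrib, hc] at hsum
  rw [← Finset.sum_div, ← Finset.sum_div] at hsum
  show 1/(m:ℝ) * ∑ i, |z i - b i| + (∑ i, (y i - z i)*v i) - 2*ε ≤ 1/(m:ℝ) * ∑ i, |y i - b i|
  have e1 : (1:ℝ)/m * ∑ i, |z i - b i| = (∑ i, |z i - b i|)/m := by ring
  have e2 : (1:ℝ)/m * ∑ i, |y i - b i| = (∑ i, |y i - b i|)/m := by ring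
  rw [e1, e2]
  exact hsum
end

section
/- Let n ≥ 1, 1 ≤ s ≤ n, R > 0, L > μ > 0, κ = μ/L, and α_s = min{1, s/√n}. Suppose x, σ ∈ ℝⁿ satisfy ‖x‖₂ ≤ R, ‖σ‖₂ ≤ L, ⟨σ, x⟩ ≥ μR, and σ₁ ≥ ... ≥ σₙ ≥ 0. Then ∑_{i=1}^s xᵢ ≥ (κ·α_s - √(s - α_s²)·√(1 - κ²))·R. -/
/-!
Let `u = σ / ‖σ‖` and let `c` be the indicator of the first `s` coordinates. Cauchy–Schwarz on
the components of `c` and `x` orthogonal to `u` gives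
`⟨c, x⟩ ≥ β t R - √(s - β²) √(R² - (t R)²)` with `β = ⟨u, c⟩` and `t R = ⟨u, x⟩`, and this bound
increases with `β` and `t`. The hypothesis on `⟨σ, x⟩` gives `t ≥ κ`. For `β ≥ α_s`, write the
antitone nonnegative `σ` as a nonnegative combination of the prefix indicators `1_{[0, m)}`,
`m ≤ n`: by the triangle inequality it suffices that `α_s ‖1_{[0, m)}‖ ≤ ⟨c, 1_{[0, m)}⟩`,
that is `α_s √m ≤ min s m`.
-/

open Finset RealInnerProductSpace
open scoped Classical

theorem inner_mul_inner_sub_sqrt_mul_sqrt_le_inner {E : Type*} [NormedAddCommGroup E]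
    [InnerProductSpace ℝ E] {u : E} (hu : ‖u‖ = 1) (c x : E) :
    ⟪u, c⟫ * ⟪u, x⟫ - √(‖c‖ ^ 2 - ⟪u, c⟫ ^ 2) * √(‖x‖ ^ 2 - ⟪u, x⟫ ^ 2) ≤ ⟪c, x⟫ := by
  have inner_perp (y z : E) :
      ⟪y - ⟪u, y⟫ • u, z - ⟪u, z⟫ • u⟫ = ⟪y, z⟫ - ⟪u, y⟫ * ⟪u, z⟫ := by
    simp only [inner_sub_left, inner_sub_right, real_inner_smul_left, real_inner_smul_right,
      real_inner_self_eq_norm_sq, hu, real_inner_comm u]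
    ring
  have norm_perp (y : E) : ‖y - ⟪u, y⟫ • u‖ = √(‖y‖ ^ 2 - ⟪u, y⟫ ^ 2) := by
    rw [← real_inner_self_eq_norm_sq, sq, ← inner_perp, real_inner_self_eq_norm_sq,
      Real.sqrt_sq (norm_nonneg _)]
  have h := neg_le_of_abs_le (abs_real_inner_le_norm (c - ⟪u, c⟫ • u) (x - ⟪u, x⟫ • u))
  rw [inner_perp, norm_perp, norm_perp] at h
  linarith

noncomputable def prefixIndicator (n j : ℕ) : EuclideanSpace ℝ (Fin n) :=
  WithLp.toLp 2 fun i => if (i : ℕ) < j then 1 else 0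

theorem inner_prefixIndicator_left (n j : ℕ) (v : EuclideanSpace ℝ (Fin n)) :
    ⟪prefixIndicator n j, v⟫ = ∑ i ∈ univ.filter (fun i : Fin n => (i : ℕ) < j), v i := by
  simp [prefixIndicator, PiLp.inner_apply, sum_filter]

theorem inner_prefixIndicator (n j k : ℕ) :
    ⟪prefixIndicator n j, prefixIndicator n k⟫ = (min n (min j k) : ℕ) := by
  rw [inner_prefixIndicator_left]
  simp only [prefixIndicator, PiLp.toLp_apply, sum_boole, filter_filter, ← lt_min_iff,
    Fin.card_filter_val_lt]

theorem norm_prefixIndicator (n j : ℕ) : ‖prefixIndicator n j‖ = √(min n j : ℕ) := by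
  rw [← Real.sqrt_sq (norm_nonneg _), ← real_inner_self_eq_norm_sq, inner_prefixIndicator,
    min_self]

theorem Fin.extend_val_zero_apply {α : Type*} [Zero α] {n : ℕ} (v : Fin n → α) (k : ℕ) :
    Function.extend Fin.val v 0 k = if h : k < n then v ⟨k, h⟩ else 0 := by
  split_ifs with h
  · exact Fin.val_injective.extend_apply v 0 ⟨k, h⟩
  · exact Function.extend_apply' _ _ _ fun ⟨i, hi⟩ => h (hi ▸ i.isLt)

theorem toLp_eq_sum_smul_prefixIndicator {n : ℕ} (v : Fin n → ℝ) :
    WithLp.toLp 2 v = ∑ m ∈ range n,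
      (Function.extend Fin.val v 0 m - Function.extend Fin.val v 0 (m + 1)) •
        prefixIndicator n (m + 1) := by
  ext i
  have hIco : (range n).filter (fun m => (i : ℕ) < m + 1) = Ico (i : ℕ) n := by
    ext m; simp only [mem_filter, mem_range, mem_Ico]; omega
  have htelescope := sum_Ico_sub (Function.extend Fin.val v 0) i.isLt.le
  simp only [WithLp.ofLp_sum, Finset.sum_apply, PiLp.smul_apply, prefixIndicator,
    smul_eq_mul, mul_ite, mul_one, mul_zero, ← sum_filter, hIco]
  rw [Fin.val_injective.extend_apply, Fin.extend_val_zero_apply, dif_neg (lt_irrefl n)]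
    at htelescope
  rw [sum_sub_distrib] at htelescope ⊢
  linarith

theorem Antitone.extend_val_zero {n : ℕ} {σ : Fin n → ℝ} (hσ : Antitone σ) (h0 : 0 ≤ σ) :
    Antitone (Function.extend Fin.val σ 0) := by
  intro j k hjk
  simp only [Fin.extend_val_zero_apply]
  split_ifs with hk hj hj
  · exact hσ (Fin.mk_le_mk.2 hjk)
  · omega
  · exact h0 _
  · rfl

theorem min_one_div_sqrt_mul_sqrt_le_min {m n : ℕ} (s : ℕ) (hmn : m ≤ n) :
    min 1 (s / √n) * √m ≤ (min s m : ℕ) := by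
  rcases m.eq_zero_or_pos with rfl | hm
  · simp
  have hn : 0 < √n := Real.sqrt_pos.2 (by exact_mod_cast hm.trans_le hmn)
  rw [Nat.cast_min]
  refine le_min ?_ ?_
  · calc min 1 (s / √n) * √m ≤ s / √n * √n := by
          gcongr
          exact min_le_right _ _
      _ = s := div_mul_cancel₀ _ hn.ne'
  · calc min 1 (s / √n) * √m ≤ 1 * √m := by gcongr; exact min_le_left _ _
      _ ≤ m := by rw [one_mul, Real.sqrt_le_self_iff]; right; exact_mod_cast hm

theorem min_one_div_sqrt_mul_norm_le_inner_prefixIndicator {n : ℕ} (s : ℕ) {σ : Fin n → ℝ}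
    (hσ : Antitone σ) (h0 : 0 ≤ σ) :
    min 1 (s / √n) * ‖WithLp.toLp 2 σ‖ ≤ ⟪prefixIndicator n s, WithLp.toLp 2 σ⟫ := by
  set d : ℕ → ℝ := fun m => Function.extend Fin.val σ 0 m - Function.extend Fin.val σ 0 (m + 1)
  have hd (m : ℕ) : 0 ≤ d m := sub_nonneg.2 (hσ.extend_val_zero h0 m.le_succ)
  rw [toLp_eq_sum_smul_prefixIndicator σ]
  calc min 1 (s / √n) * ‖∑ m ∈ range n, d m • prefixIndicator n (m + 1)‖
      ≤ min 1 (s / √n) * ∑ m ∈ range n, d m * √(m + 1 : ℕ) := by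
        gcongr
        refine (norm_sum_le _ _).trans_eq (sum_congr rfl fun m hm => ?_)
        rw [norm_smul, norm_prefixIndicator, Real.norm_of_nonneg (hd m),
          min_eq_right (mem_range.1 hm)]
    _ = ∑ m ∈ range n, d m * (min 1 (s / √n) * √(m + 1 : ℕ)) := by
        rw [mul_sum]; exact sum_congr rfl fun m _ => by ring
    _ ≤ ∑ m ∈ range n, d m * (min s (m + 1) : ℕ) := by
        gcongr with m hm
        · exact hd m
        · exact min_one_div_sqrt_mul_sqrt_le_min s (mem_range.1 hm)
    _ = ⟪prefixIndicator n s, ∑ m ∈ range n, d m • prefixIndicator n (m + 1)⟫ := by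
        simp only [inner_sum, real_inner_smul_right, inner_prefixIndicator]
        refine sum_congr rfl fun m hm => ?_
        rw [min_eq_right ((min_le_right _ _).trans (mem_range.1 hm))]

theorem mul_sub_sqrt_mul_sqrt_le {s p q a b k R y : ℝ} (ha : 0 ≤ a) (hab : a ≤ b) (hk : 0 ≤ k)
    (hR : 0 ≤ R) (hky : k * R ≤ y) (hp : p ≤ s) (hq : q ≤ R ^ 2) :
    (k * a - √(s - a ^ 2) * √(1 - k ^ 2)) * R ≤ b * y - √(p - b ^ 2) * √(q - y ^ 2) := by
  have hkR : 0 ≤ k * R := mul_nonneg hk hR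
  have h_cross : a * (k * R) ≤ b * y := mul_le_mul hab hky hkR (ha.trans hab)
  have h_left : √(p - b ^ 2) ≤ √(s - a ^ 2) := Real.sqrt_le_sqrt (by nlinarith)
  have h_right : √(q - y ^ 2) ≤ √(1 - k ^ 2) * R := by
    rw [← Real.sqrt_sq hR, ← Real.sqrt_mul' _ (sq_nonneg R)]
    exact Real.sqrt_le_sqrt (by nlinarith)
  nlinarith [mul_le_mul h_left h_right (Real.sqrt_nonneg _) (Real.sqrt_nonneg _)]

theorem truncated_spectral_descent_descent_term_lower_bound_general
    (n s : ℕ)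
    (R L μ : ℝ) (hR : 0 < R) (hμ : 0 < μ)
    (κ αs : ℝ) (hκ : κ = μ / L) (hαs : αs = min 1 ((s : ℝ) / Real.sqrt n))
    (x σ : Fin n → ℝ)
    (hx : Real.sqrt (∑ i, x i ^ 2) ≤ R)
    (hσ : Real.sqrt (∑ i, σ i ^ 2) ≤ L)
    (hdot : μ * R ≤ ∑ i, σ i * x i)
    (hmono : ∀ i j : Fin n, i ≤ j → σ j ≤ σ i)
    (hnonneg : ∀ i, 0 ≤ σ i) :
    (κ * αs - Real.sqrt ((s : ℝ) - αs ^ 2) * Real.sqrt (1 - κ ^ 2)) * R ≤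
      ∑ i ∈ Finset.univ.filter (fun i : Fin n => (i : ℕ) < s), x i := by
  set X : EuclideanSpace ℝ (Fin n) := WithLp.toLp 2 x
  set S : EuclideanSpace ℝ (Fin n) := WithLp.toLp 2 σ
  have hX : ‖X‖ ≤ R := by simpa [X, EuclideanSpace.norm_eq] using hx
  have hSL : ‖S‖ ≤ L := by simpa [S, EuclideanSpace.norm_eq] using hσ
  have hSX : μ * R ≤ ⟪S, X⟫ := by simpa [S, X, PiLp.inner_apply, mul_comm] using hdot
  have hμS : μ ≤ ‖S‖ :=
    le_of_mul_le_mul_right (hSX.trans ((real_inner_le_norm S X).trans (by gcongr))) hR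
  have hS : 0 < ‖S‖ := hμ.trans_le hμS
  set u := ‖S‖⁻¹ • S
  have hu : ‖u‖ = 1 := norm_smul_inv_norm (norm_pos_iff.1 hS)
  have hαu : αs ≤ ⟪u, prefixIndicator n s⟫ := by
    rw [real_inner_smul_left, real_inner_comm, ← div_eq_inv_mul, le_div_iff₀ hS, hαs]
    exact min_one_div_sqrt_mul_norm_le_inner_prefixIndicator s (fun i j h => hmono i j h) hnonneg
  have hκu : κ * R ≤ ⟪u, X⟫ := by
    rw [real_inner_smul_left, ← div_eq_inv_mul, hκ, div_mul_eq_mul_div]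
    exact div_le_div₀ (by linarith [mul_pos hμ hR]) hSX hS hSL
  have hc : ‖prefixIndicator n s‖ ^ 2 ≤ s := by
    rw [← real_inner_self_eq_norm_sq, inner_prefixIndicator, min_self]
    exact_mod_cast min_le_right n s
  calc _ ≤ _ := mul_sub_sqrt_mul_sqrt_le (hαs ▸ le_min zero_le_one (by positivity)) hαu
          (hκ ▸ div_nonneg hμ.le (hS.le.trans hSL)) hR.le hκu hc
          (pow_le_pow_left₀ (norm_nonneg X) hX 2)
    _ ≤ ⟪prefixIndicator n s, X⟫ := inner_mul_inner_sub_sqrt_mul_sqrt_le_inner hu _ _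
    _ = _ := inner_prefixIndicator_left n s X

theorem truncated_spectral_descent_descent_term_lower_bound
    (n s : ℕ) (hn : 1 ≤ n) (hs : 1 ≤ s) (hsn : s ≤ n)
    (R L μ : ℝ) (hR : 0 < R) (hμ : 0 < μ) (hμL : μ < L)
    (κ αs : ℝ) (hκ : κ = μ / L) (hαs : αs = min 1 ((s : ℝ) / Real.sqrt n))
    (x σ : Fin n → ℝ)
    (hx : Real.sqrt (∑ i, x i ^ 2) ≤ R)
    (hσ : Real.sqrt (∑ i, σ i ^ 2) ≤ L)
    (hdot : μ * R ≤ ∑ i, σ i * x i)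
    (hmono : ∀ i j : Fin n, i ≤ j → σ j ≤ σ i)
    (hnonneg : ∀ i, 0 ≤ σ i) :
    (κ * αs - Real.sqrt ((s : ℝ) - αs ^ 2) * Real.sqrt (1 - κ ^ 2)) * R ≤
      ∑ i ∈ Finset.univ.filter (fun i : Fin n => (i : ℕ) < s), x i :=
  truncated_spectral_descent_descent_term_lower_bound_general n s R L μ hR hμ κ αs hκ hαs x σ hx hσ
    hdot hmono hnonneg
end
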